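/- arXiv:1709.03179 — 5 statements merged into one kernel-verified Lean document; each statement's English description precedes it below -/
import Mathlib

section
/- For the triangle K_3, sep_2(K_3) = 2/3 while sep_2*(K_3) = 1/2; in particular the fractional relaxation can be strictly smaller than the integral value. -/
open Finset

open scoped Classical in
/-- The family `R_k(G)`. -/
noncomputable def RkFam {V : Type*} [Fintype V] (G : SimpleGraph V) (k : ℕ) :
    Finset (Finset V) :=
  Finset.univ.filter fun A => 1 ≤ A.card ∧ A.card ≤ k ∧ (G.induce (A : Set V)).Connected

/-!
Integrally, deleting at most one edge of the triangle leaves it connected, so two edges must go,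
and two edges suffice (isolate a vertex).

Fractionally, every `A ∈ R_2(K_3)` has `|∂A| = |A| (3 - |A|) ≥ |A|`, so double counting the
covering constraints gives `∑ x_A |∂A| ≥ ∑ x_A |A| = ∑_v 1 = 3`. Equality holds when `x` lives on
the three edges, and `x = 1/2` on each edge is feasible.
-/

namespace SimpleGraph

variable {V : Type*}

theorem preconnected_deleteEdges_top_of_card_le_one [Fintype V] (hV : 2 < Fintype.card V)
    (T : Finset (Sym2 V)) (hT : T.card ≤ 1) :
    ((⊤ : SimpleGraph V).deleteEdges (T : Set (Sym2 V))).Preconnected := by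
  classical
  intro u v
  by_cases huv : u = v
  · exact huv ▸ Reachable.refl u
  by_cases he : s(u, v) ∈ T
  · obtain ⟨w, -, hw⟩ : ∃ w ∈ (univ : Finset V), w ∉ ({u, v} : Finset V) :=
      exists_mem_notMem_of_card_lt_card (card_le_two.trans_lt (by rwa [card_univ]))
    simp only [mem_insert, mem_singleton, not_or] at hw
    have hne : ∀ e ∈ T, e ≠ s(u, v) → False := fun e he' h => h (card_le_one.mp hT _ he' _ he)
    have huw : ((⊤ : SimpleGraph V).deleteEdges (T : Set (Sym2 V))).Adj u w :=
      deleteEdges_adj.mpr ⟨Ne.symm hw.1, fun h => hne _ h (by simp [hw.2, huv])⟩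
    have hwv : ((⊤ : SimpleGraph V).deleteEdges (T : Set (Sym2 V))).Adj w v :=
      deleteEdges_adj.mpr ⟨hw.2, fun h => hne _ h (by simp [hw.1, hw.2])⟩
    exact huw.reachable.trans hwv.reachable
  · exact (deleteEdges_adj.mpr ⟨huv, he⟩).reachable

theorem card_filter_top_adj_product_compl [Fintype V] [DecidableEq V] (A : Finset V) :
    ((A ×ˢ Aᶜ).filter fun p => (⊤ : SimpleGraph V).Adj p.1 p.2).card
      = A.card * (Fintype.card V - A.card) := by
  rw [filter_true_of_mem, card_product, card_compl]
  rintro ⟨a, b⟩ hab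
  simp only [mem_product, mem_compl] at hab
  exact top_adj a b |>.mpr fun h => hab.2 (h ▸ hab.1)

theorem RkFam_top [Fintype V] (k : ℕ) :
    RkFam (⊤ : SimpleGraph V) k = univ.filter fun A => 1 ≤ A.card ∧ A.card ≤ k := by
  ext A
  simp only [RkFam, mem_filter, mem_univ, true_and, induce_top]
  refine ⟨fun h => ⟨h.1, h.2.1⟩, fun ⟨hA, hk⟩ => ⟨hA, hk, ?_⟩⟩
  have : Nonempty (A : Set V) := (card_pos.mp hA).to_subtype
  exact connected_top

end SimpleGraph

theorem Finset.sum_card_mul_eq_card_of_cover {V : Type*} [Fintype V] [DecidableEq V]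
    (F : Finset (Finset V)) (x : Finset V → ℝ)
    (hx : ∀ v : V, ∑ A ∈ F.filter (fun A => v ∈ A), x A = 1) :
    ∑ A ∈ F, (A.card : ℝ) * x A = Fintype.card V := by
  have hcount : ∑ v, ∑ A ∈ F.filter (fun A => v ∈ A), x A = ∑ A ∈ F, (A.card : ℝ) * x A := by
    simp_rw [sum_filter]
    rw [sum_comm]
    refine sum_congr rfl fun A _ => ?_
    rw [sum_ite_mem, univ_inter, sum_const, nsmul_eq_mul]
  simp [← hcount, hx]

open SimpleGraph

theorem isLeast_sep_two_triangle :
    IsLeast {x : ℝ | ∃ T : Finset (Sym2 (Fin 3)),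
        T ⊆ (⊤ : SimpleGraph (Fin 3)).edgeFinset ∧
        (∀ v : Fin 3,
          ({u | ((⊤ : SimpleGraph (Fin 3)).deleteEdges (T : Set (Sym2 (Fin 3)))).Reachable u v}).ncard ≤ 2) ∧
        x = (T.card : ℝ) / 3} (2 / 3) := by
  constructor
  · refine ⟨{s(0, 1), s(0, 2)}, by decide, fun v => ?_, by rw [card_pair (by decide)]; norm_num⟩
    rw [Set.ncard_eq_toFinset_card']
    revert v
    decide
  · rintro _ ⟨T, -, hsmall, rfl⟩
    suffices 2 ≤ T.card by
      have : (2 : ℝ) ≤ T.card := by exact_mod_cast this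
      linarith
    by_contra! hT
    have hconn := preconnected_deleteEdges_top_of_card_le_one (by simp) T (by omega)
    have huniv : {u | ((⊤ : SimpleGraph (Fin 3)).deleteEdges (T : Set (Sym2 (Fin 3)))).Reachable u 0}
        = Set.univ := Set.eq_univ_of_forall fun u => hconn u 0
    simpa [huniv] using hsmall 0

theorem isLeast_fractional_sep_two_triangle :
    IsLeast {c : ℝ | ∃ x : Finset (Fin 3) → ℝ, (∀ A, 0 ≤ x A) ∧
        (∀ v : Fin 3, ∑ A ∈ (RkFam (⊤ : SimpleGraph (Fin 3)) 2).filter (fun A => v ∈ A), x A = 1) ∧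
        c = (∑ A ∈ RkFam (⊤ : SimpleGraph (Fin 3)) 2,
              x A * (((A ×ˢ Aᶜ).filter fun p => (⊤ : SimpleGraph (Fin 3)).Adj p.1 p.2).card : ℝ)) / 6}
      (1 / 2) := by
  set F := RkFam (⊤ : SimpleGraph (Fin 3)) 2 with hF
  rw [RkFam_top] at hF
  have hboundary (A : Finset (Fin 3)) :
      ((A ×ˢ Aᶜ).filter fun p => (⊤ : SimpleGraph (Fin 3)).Adj p.1 p.2).card
        = A.card * (3 - A.card) := by
    rw [card_filter_top_adj_product_compl, Fintype.card_fin]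
  have hcover (x : Finset (Fin 3) → ℝ) (hx : ∀ v : Fin 3, ∑ A ∈ F.filter (fun A => v ∈ A), x A = 1) :
      ∑ A ∈ F, (A.card : ℝ) * x A = 3 := by
    simpa using sum_card_mul_eq_card_of_cover F x hx
  constructor
  · set x : Finset (Fin 3) → ℝ := fun A => if A.card = 2 then 1 / 2 else 0
    have hx (v : Fin 3) : ∑ A ∈ F.filter (fun A => v ∈ A), x A = 1 := by
      have hedges : #((F.filter (fun A => v ∈ A)).filter fun A => A.card = 2) = 2 := by
        rw [hF]
        revert v
        decide
      rw [sum_ite, sum_const, sum_const_zero, add_zero, nsmul_eq_mul, hedges]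
      norm_num
    refine ⟨x, fun A => by positivity, hx, ?_⟩
    suffices ∑ A ∈ F, x A * (A.card * (3 - A.card) : ℕ) = ∑ A ∈ F, (A.card : ℝ) * x A by
      simp_rw [hboundary, this, hcover x hx]
      norm_num
    refine sum_congr rfl fun A _ => ?_
    by_cases h : A.card = 2 <;> simp [x, h]
  · rintro _ ⟨x, hx0, hx, rfl⟩
    have hle : ∑ A ∈ F, (A.card : ℝ) * x A ≤ ∑ A ∈ F, x A * (A.card * (3 - A.card) : ℕ) := by
      refine sum_le_sum fun A hA => ?_
      obtain ⟨h1, h2⟩ : 1 ≤ A.card ∧ A.card ≤ 2 := by simpa [hF] using hA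
      rw [mul_comm]
      gcongr
      · exact hx0 A
      · exact_mod_cast Nat.le_mul_of_pos_right _ (by omega)
    simp_rw [hboundary]
    linarith [hcover x hx]

/-- for the triangle `K_3`, `sep_2(K_3) = 2/3` while `sep_2*(K_3) = 1/2`. -/
theorem stmt3 :
    (sInf {x : ℝ | ∃ T : Finset (Sym2 (Fin 3)),
        T ⊆ (⊤ : SimpleGraph (Fin 3)).edgeFinset ∧
        (∀ v : Fin 3,
          ({u | ((⊤ : SimpleGraph (Fin 3)).deleteEdges (T : Set (Sym2 (Fin 3)))).Reachable u v}).ncard ≤ 2) ∧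
        x = (T.card : ℝ) / 3} = 2 / 3) ∧
    (sInf {c : ℝ | ∃ x : Finset (Fin 3) → ℝ, (∀ A, 0 ≤ x A) ∧
        (∀ v : Fin 3, ∑ A ∈ (RkFam (⊤ : SimpleGraph (Fin 3)) 2).filter (fun A => v ∈ A), x A = 1) ∧
        c = (∑ A ∈ RkFam (⊤ : SimpleGraph (Fin 3)) 2,
              x A * (((A ×ˢ Aᶜ).filter fun p => (⊤ : SimpleGraph (Fin 3)).Adj p.1 p.2).card : ℝ)) / 6}
      = 1 / 2) :=
  ⟨isLeast_sep_two_triangle.csInf_eq, isLeast_fractional_sep_two_triangle.csInf_eq⟩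
end

section
/- Let H be a finite hypergraph on a vertex set V of size n, containing all singletons as edges, with weights w: H → ℝ≥0 satisfying w({v}) ≤ 1 for every v. Define σ = min over edge-covers F ⊆ H (with ∪F = V) of (1/n) Σ_{A∈F} w(A), and σ* = min over fractional edge-covers x: H → ℝ≥0 (with Σ_{A∋v} x_A ≥ 1 for all v) of (1/n) Σ_A w(A) x_A. Then σ* ≤ σ ≤ σ*(2 + ln(1/σ*)). -/
open Finset

/-- The optimum `σ(H,w)` of the weighted edge-cover problem. -/
noncomputable def hySigma {V : Type*} [Fintype V] [DecidableEq V]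
    (H : Finset (Finset V)) (w : Finset V → ℝ) : ℝ :=
  sInf {c : ℝ | ∃ F ⊆ H, (∀ v : V, ∃ A ∈ F, v ∈ A) ∧
      c = (∑ A ∈ F, w A) / (Fintype.card V : ℝ)}

/-- The optimum `σ*(H,w)` of the fractional edge-cover problem. -/
noncomputable def hySigmaStar {V : Type*} [Fintype V] [DecidableEq V]
    (H : Finset (Finset V)) (w : Finset V → ℝ) : ℝ :=
  sInf {c : ℝ | ∃ x : Finset V → ℝ, (∀ A, 0 ≤ x A) ∧
      (∀ v : V, 1 ≤ ∑ A ∈ H.filter (fun A => v ∈ A), x A) ∧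
      c = (∑ A ∈ H, w A * x A) / (Fintype.card V : ℝ)}


/-! Turning an edge-cover into its indicator vector gives `σ* ≤ σ`. Conversely, fix a fractional
cover `x` of weight `W = ∑ w(A) x_A` and cover greedily: while `m > W` vertices remain uncovered,
take the edge of least weight per newly covered vertex. Averaging this ratio against `x`, which
covers each remaining vertex at least once, shows that an edge covering `k` new vertices costs at
most `W k / m ≤ W (log m - log (m - k))`. The logarithms telescope down to `W` remaining vertices,
which are covered by singletons of weight at most `1`, for a total of at most `W (2 + log (n / W))`.
Since `c ↦ c (2 + log (1 / c))` is continuous, the bound passes to the infimum `σ*` of `W / n`. -/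

noncomputable def logBound (c : ℝ) : ℝ := c * (2 + Real.log (1 / c))

lemma logBound_eq (c : ℝ) : logBound c = 2 * c - c * Real.log c := by
  rw [logBound, one_div, Real.log_inv]
  ring

lemma continuous_logBound : Continuous logBound := by
  simp only [funext logBound_eq]
  exact (continuous_const.mul continuous_id).sub Real.continuous_mul_log

lemma le_apply_csInf_of_forall_le {α β : Type*} [ConditionallyCompleteLinearOrder α]
    [TopologicalSpace α] [OrderTopology α] [TopologicalSpace β] [Preorder β]
    [OrderClosedTopology β] {S : Set α} {f : α → β} {b : β} (hf : Continuous f)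
    (hne : S.Nonempty) (hbdd : BddBelow S) (h : ∀ c ∈ S, b ≤ f c) : b ≤ f (sInf S) :=
  (isClosed_le continuous_const hf).closure_subset_iff.mpr h (csInf_mem_closure hne hbdd)

/-- Bounds the cost of greedily covering `t` vertices when a fractional cover of weight `W`
exists; once `t ≤ W` the remaining vertices are covered by singletons. -/
noncomputable def greedyBound (W t : ℝ) : ℝ :=
  if t ≤ W then t else W * (2 + Real.log (t / W))

lemma add_greedyBound_sub_le {W m k : ℝ} (hW : 0 ≤ W) (hWm : W < m) (hkm : k ≤ m) :
    W * k / m + greedyBound W (m - k) ≤ greedyBound W m := by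
  have hm : 0 < m := hW.trans_lt hWm
  rw [greedyBound, greedyBound, if_neg hWm.not_ge]
  obtain rfl | hW := hW.eq_or_lt
  · split_ifs <;> simp_all
  have hshare : W * k / m ≤ W := by
    rw [div_le_iff₀ hm]
    exact mul_le_mul_of_nonneg_left hkm hW.le
  split_ifs with hsmall
  · have := mul_nonneg hW.le (Real.log_nonneg ((one_le_div hW).mpr hWm.le))
    linarith
  · have hmk : 0 < m - k := hW.trans (not_le.mp hsmall)
    have hlog : k / m ≤ Real.log m - Real.log (m - k) := by
      have := Real.one_sub_inv_le_log_of_pos (div_pos hm hmk)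
      rw [inv_div, Real.log_div hm.ne' hmk.ne'] at this
      convert this using 1
      field_simp
      ring
    rw [Real.log_div hmk.ne' hW.ne', Real.log_div hm.ne' hW.ne']
    have := mul_le_mul_of_nonneg_left hlog hW.le
    rw [mul_div_assoc]
    linarith

lemma greedyBound_div_le_logBound {W t : ℝ} (ht : 0 ≤ t) :
    greedyBound W t / t ≤ logBound (min (W / t) 1) := by
  obtain rfl | ht := ht.eq_or_lt
  · simp [logBound]
  rw [greedyBound]
  split_ifs with htW
  · rw [min_eq_right ((one_le_div ht).mpr htW), div_self ht.ne', logBound_eq]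
    norm_num
  · rw [min_eq_left ((div_le_one ht).mpr (not_le.mp htW).le), logBound, one_div_div]
    apply le_of_eq
    ring

section Greedy

variable {V : Type*} [DecidableEq V] {H : Finset (Finset V)} {w x : Finset V → ℝ}

lemma exists_cover_sum_le_card (hsing : ∀ v : V, {v} ∈ H) (hw1 : ∀ v : V, w {v} ≤ 1)
    (U : Finset V) :
    ∃ F ⊆ H, (∀ v ∈ U, ∃ A ∈ F, v ∈ A) ∧ ∑ A ∈ F, w A ≤ #U := by
  refine ⟨U.image singleton, ?_, fun v hv => ⟨{v}, mem_image_of_mem _ hv, mem_singleton_self v⟩,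
    ?_⟩
  · simp only [subset_iff, mem_image]
    rintro _ ⟨v, -, rfl⟩
    exact hsing v
  · rw [sum_image fun _ _ _ _ h => singleton_injective h]
    exact (sum_le_sum fun v _ => hw1 v).trans (by simp)

lemma card_le_sum_mul_card_inter (hxc : ∀ v : V, 1 ≤ ∑ A ∈ H.filter (fun A => v ∈ A), x A)
    (U : Finset V) : (#U : ℝ) ≤ ∑ B ∈ H, x B * #(B ∩ U) :=
  calc (#U : ℝ) = ∑ _v ∈ U, (1 : ℝ) := by simp
    _ ≤ ∑ v ∈ U, ∑ B ∈ H, if v ∈ B then x B else 0 :=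
      sum_le_sum fun v _ => by simpa only [sum_filter] using hxc v
    _ = ∑ B ∈ H, x B * #(B ∩ U) := by
      rw [sum_comm]
      refine sum_congr rfl fun B _ => ?_
      rw [← sum_filter, sum_const, filter_mem_eq_inter, inter_comm, nsmul_eq_mul, mul_comm]

/-- The greedy choice: an edge meeting `U` of least weight per newly covered vertex. -/
lemma exists_mem_forall_mul_card_inter_le (hw0 : ∀ A ∈ H, 0 ≤ w A)
    (hsing : ∀ v : V, {v} ∈ H) {U : Finset V} (hU : U.Nonempty) :
    ∃ A ∈ H, (A ∩ U).Nonempty ∧ ∀ B ∈ H, w A * #(B ∩ U) ≤ w B * #(A ∩ U) := by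
  obtain ⟨u, hu⟩ := hU
  have hmeet : (H.filter fun A => (A ∩ U).Nonempty).Nonempty :=
    ⟨{u}, mem_filter.mpr ⟨hsing u, u, mem_inter.mpr ⟨mem_singleton_self u, hu⟩⟩⟩
  obtain ⟨A, hA, hmin⟩ := exists_min_image _ (fun A => w A / (#(A ∩ U) : ℝ)) hmeet
  rw [mem_filter] at hA
  refine ⟨A, hA.1, hA.2, fun B hB => ?_⟩
  obtain hBU | hBU := (B ∩ U).eq_empty_or_nonempty
  · simpa [hBU] using mul_nonneg (hw0 B hB) (Nat.cast_nonneg _)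
  · have := hmin B (mem_filter.mpr ⟨hB, hBU⟩)
    rw [div_le_div_iff₀ (by exact_mod_cast hA.2.card_pos) (by exact_mod_cast hBU.card_pos)] at this
    linarith

lemma exists_mem_mul_card_le (hw0 : ∀ A ∈ H, 0 ≤ w A) (hsing : ∀ v : V, {v} ∈ H)
    (hx0 : ∀ A, 0 ≤ x A) (hxc : ∀ v : V, 1 ≤ ∑ A ∈ H.filter (fun A => v ∈ A), x A)
    {U : Finset V} (hU : U.Nonempty) :
    ∃ A ∈ H, (A ∩ U).Nonempty ∧ w A * #U ≤ (∑ B ∈ H, w B * x B) * #(A ∩ U) := by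
  obtain ⟨A, hAH, hAU, hA⟩ := exists_mem_forall_mul_card_inter_le hw0 hsing hU
  refine ⟨A, hAH, hAU, ?_⟩
  calc w A * #U ≤ w A * ∑ B ∈ H, x B * #(B ∩ U) :=
        mul_le_mul_of_nonneg_left (card_le_sum_mul_card_inter hxc U) (hw0 A hAH)
    _ = ∑ B ∈ H, x B * (w A * #(B ∩ U)) := by
      rw [mul_sum]
      exact sum_congr rfl fun B _ => by ring
    _ ≤ ∑ B ∈ H, x B * (w B * #(A ∩ U)) :=
      sum_le_sum fun B hB => mul_le_mul_of_nonneg_left (hA B hB) (hx0 B)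
    _ = (∑ B ∈ H, w B * x B) * #(A ∩ U) := by
      rw [sum_mul]
      exact sum_congr rfl fun B _ => by ring

lemma exists_cover_sum_le_greedyBound (hw0 : ∀ A ∈ H, 0 ≤ w A) (hsing : ∀ v : V, {v} ∈ H)
    (hw1 : ∀ v : V, w {v} ≤ 1) (hx0 : ∀ A, 0 ≤ x A)
    (hxc : ∀ v : V, 1 ≤ ∑ A ∈ H.filter (fun A => v ∈ A), x A) (U : Finset V) :
    ∃ F ⊆ H, (∀ v ∈ U, ∃ A ∈ F, v ∈ A) ∧
      ∑ A ∈ F, w A ≤ greedyBound (∑ A ∈ H, w A * x A) #U := by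
  set W := ∑ A ∈ H, w A * x A
  have hW : 0 ≤ W := sum_nonneg fun A hA => mul_nonneg (hw0 A hA) (hx0 A)
  induction U using strongInduction with
  | H U ih =>
  by_cases hUW : (#U : ℝ) ≤ W
  · rw [greedyBound, if_pos hUW]
    exact exists_cover_sum_le_card hsing hw1 U
  have hU : U.Nonempty := card_pos.mp (by exact_mod_cast hW.trans_lt (not_le.mp hUW))
  obtain ⟨A, hAH, hAU, hA⟩ := exists_mem_mul_card_le hw0 hsing hx0 hxc hU
  obtain ⟨F, hFH, hFcov, hF⟩ :=
    ih (U \ A) (sdiff_lt_left.mpr (not_disjoint_iff_nonempty_inter.mpr hAU))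
  refine ⟨insert A F, insert_subset hAH hFH, fun v hv => ?_, ?_⟩
  · by_cases hvA : v ∈ A
    · exact ⟨A, mem_insert_self A F, hvA⟩
    · obtain ⟨B, hB, hvB⟩ := hFcov v (mem_sdiff.mpr ⟨hv, hvA⟩)
      exact ⟨B, mem_insert_of_mem hB, hvB⟩
  have hinsert : ∑ B ∈ insert A F, w B ≤ w A + ∑ B ∈ F, w B := by
    by_cases hAF : A ∈ F
    · rw [insert_eq_of_mem hAF]
      linarith [hw0 A hAH]
    · rw [sum_insert hAF]
  have hcard : (#(U \ A) : ℝ) = #U - #(A ∩ U) := by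
    rw [eq_sub_iff_add_eq, inter_comm]
    exact_mod_cast card_sdiff_add_card_inter U A
  have hUpos : (0 : ℝ) < #U := by exact_mod_cast hU.card_pos
  calc ∑ B ∈ insert A F, w B ≤ w A + ∑ B ∈ F, w B := hinsert
    _ ≤ W * #(A ∩ U) / #U + greedyBound W (#U - #(A ∩ U)) := by
      rw [← hcard]
      exact add_le_add ((le_div_iff₀ hUpos).mpr hA) hF
    _ ≤ greedyBound W #U :=
      add_greedyBound_sub_le hW (not_le.mp hUW)
        (by exact_mod_cast card_le_card inter_subset_right)

end Greedy

section Costs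

variable {V : Type*} [Fintype V] [DecidableEq V] {H : Finset (Finset V)} {w : Finset V → ℝ}

def coverCosts (H : Finset (Finset V)) (w : Finset V → ℝ) : Set ℝ :=
  {c | ∃ F ⊆ H, (∀ v : V, ∃ A ∈ F, v ∈ A) ∧ c = (∑ A ∈ F, w A) / (Fintype.card V : ℝ)}

def fracCoverCosts (H : Finset (Finset V)) (w : Finset V → ℝ) : Set ℝ :=
  {c | ∃ x : Finset V → ℝ, (∀ A, 0 ≤ x A) ∧
    (∀ v : V, 1 ≤ ∑ A ∈ H.filter (fun A => v ∈ A), x A) ∧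
    c = (∑ A ∈ H, w A * x A) / (Fintype.card V : ℝ)}

lemma hySigma_eq_sInf : hySigma H w = sInf (coverCosts H w) := rfl

lemma hySigmaStar_eq_sInf : hySigmaStar H w = sInf (fracCoverCosts H w) := rfl

omit [DecidableEq V] in
lemma bddBelow_coverCosts (hw0 : ∀ A ∈ H, 0 ≤ w A) : BddBelow (coverCosts H w) := by
  refine ⟨0, ?_⟩
  rintro c ⟨F, hFH, -, rfl⟩
  exact div_nonneg (sum_nonneg fun A hA => hw0 A (hFH hA)) (Nat.cast_nonneg _)

lemma bddBelow_fracCoverCosts (hw0 : ∀ A ∈ H, 0 ≤ w A) : BddBelow (fracCoverCosts H w) := by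
  refine ⟨0, ?_⟩
  rintro c ⟨x, hx0, -, rfl⟩
  exact div_nonneg (sum_nonneg fun A hA => mul_nonneg (hw0 A hA) (hx0 A)) (Nat.cast_nonneg _)

lemma mem_fracCoverCosts_of_mem_coverCosts {c : ℝ} (hc : c ∈ coverCosts H w) :
    c ∈ fracCoverCosts H w := by
  obtain ⟨F, hFH, hcov, rfl⟩ := hc
  refine ⟨fun A => if A ∈ F then 1 else 0, fun A => by positivity, fun v => ?_, ?_⟩
  · obtain ⟨A, hAF, hvA⟩ := hcov v
    calc (1 : ℝ) = if A ∈ F then 1 else 0 := (if_pos hAF).symm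
      _ ≤ ∑ B ∈ H.filter (fun B => v ∈ B), if B ∈ F then 1 else 0 :=
        single_le_sum (f := fun B => if B ∈ F then (1 : ℝ) else 0) (fun B _ => by positivity)
          (mem_filter.mpr ⟨hFH hAF, hvA⟩)
  · simp only [mul_ite, mul_one, mul_zero]
    rw [sum_ite_mem, inter_eq_right.mpr hFH]

lemma hySigma_le_logBound (hw0 : ∀ A ∈ H, 0 ≤ w A) (hsing : ∀ v : V, {v} ∈ H)
    (hw1 : ∀ v : V, w {v} ≤ 1) {c : ℝ} (hc : c ∈ fracCoverCosts H w) :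
    hySigma H w ≤ logBound (min c 1) := by
  obtain ⟨x, hx0, hxc, rfl⟩ := hc
  obtain ⟨F, hFH, hFcov, hF⟩ :=
    exists_cover_sum_le_greedyBound hw0 hsing hw1 hx0 hxc univ
  rw [card_univ] at hF
  calc hySigma H w ≤ (∑ A ∈ F, w A) / Fintype.card V :=
        csInf_le (bddBelow_coverCosts hw0) ⟨F, hFH, fun v => hFcov v (mem_univ v), rfl⟩
    _ ≤ greedyBound (∑ A ∈ H, w A * x A) (Fintype.card V) / Fintype.card V := by gcongr
    _ ≤ _ := greedyBound_div_le_logBound (Nat.cast_nonneg _)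

end Costs

theorem stmt5_general {V : Type*} [Fintype V] [DecidableEq V]
    (H : Finset (Finset V)) (w : Finset V → ℝ)
    (hsing : ∀ v : V, {v} ∈ H)
    (hw0 : ∀ A ∈ H, 0 ≤ w A)
    (hw1 : ∀ v : V, w {v} ≤ 1) :
    hySigmaStar H w ≤ hySigma H w ∧
    hySigma H w ≤ hySigmaStar H w * (2 + Real.log (1 / hySigmaStar H w)) := by
  obtain ⟨F, hFH, hFcov, hF⟩ := exists_cover_sum_le_card hsing hw1 (univ : Finset V)
  have hsingletons : (∑ A ∈ F, w A) / Fintype.card V ∈ coverCosts H w :=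
    ⟨F, hFH, fun v => hFcov v (mem_univ v), rfl⟩
  have hne : (fracCoverCosts H w).Nonempty :=
    ⟨_, mem_fracCoverCosts_of_mem_coverCosts hsingletons⟩
  have hbdd := bddBelow_fracCoverCosts hw0
  refine ⟨?_, ?_⟩
  · rw [hySigma_eq_sInf]
    exact le_csInf ⟨_, hsingletons⟩ fun c hc =>
      csInf_le hbdd (mem_fracCoverCosts_of_mem_coverCosts hc)
  · have hle_one : hySigmaStar H w ≤ 1 :=
      (csInf_le hbdd (mem_fracCoverCosts_of_mem_coverCosts hsingletons)).trans
        (div_le_one_of_le₀ (by simpa using hF) (Nat.cast_nonneg _))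
    have hlimit : hySigma H w ≤ logBound (min (hySigmaStar H w) 1) :=
      le_apply_csInf_of_forall_le (f := fun c => logBound (min c 1))
        (continuous_logBound.comp (continuous_id.min continuous_const)) hne hbdd
        fun c hc => hySigma_le_logBound hw0 hsing hw1 hc
    rwa [min_eq_left hle_one] at hlimit

/-- for a hypergraph containing all singletons, with nonnegative weights
satisfying `w({v}) ≤ 1`, one has `σ* ≤ σ ≤ σ*(2 + ln(1/σ*))`. -/
theorem stmt5 {V : Type*} [Fintype V] [DecidableEq V] [Nonempty V]
    (H : Finset (Finset V)) (w : Finset V → ℝ)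
    (hsing : ∀ v : V, {v} ∈ H)
    (hw0 : ∀ A ∈ H, 0 ≤ w A)
    (hw1 : ∀ v : V, w {v} ≤ 1) :
    hySigmaStar H w ≤ hySigma H w ∧
    hySigma H w ≤ hySigmaStar H w * (2 + Real.log (1 / hySigmaStar H w)) :=
  stmt5_general H w hsing hw0 hw1
end

section
/- In the greedy algorithm for weighted hypergraph covering, if x is a fractional edge-cover achieving value σ*·n = Σ_A w(A)x_A, then for each step i, y_i + y_{i+1} + … + y_m ≤ (y_i/w_i)·σ*·n, where y_j = |Y_j \ (Y_1∪…∪Y_{j-1})| and w_j = w(Y_j) are the residual sizes and weights of greedily chosen edges (and w_i > 0). -/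
open Finset

/-- in the greedy algorithm, if `x` is a fractional edge-cover of total weight
`Σ_A w(A) x_A = σ*·n`, then for each step `i` with `w_i > 0`,
`y_i + y_{i+1} + … + y_m ≤ (y_i/w_i)·σ*·n`. -/
theorem stmt12 {V : Type*} [Fintype V] [DecidableEq V]
    (H : Finset (Finset V)) (w : Finset V → ℝ)
    (hsing : ∀ v : V, {v} ∈ H)
    (hw0 : ∀ A ∈ H, 0 ≤ w A)
    (m : ℕ) (Y : ℕ → Finset V)
    (hmem : ∀ i < m, Y i ∈ H)
    (hres : ∀ i < m, (Y i \ (Finset.range i).biUnion Y).Nonempty)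
    (hmin : ∀ i < m, ∀ A ∈ H, (A \ (Finset.range i).biUnion Y).Nonempty →
      w (Y i) / ((Y i \ (Finset.range i).biUnion Y).card : ℝ) ≤
        w A / ((A \ (Finset.range i).biUnion Y).card : ℝ))
    (hstop : ∀ v : V, v ∈ (Finset.range m).biUnion Y)
    (x : Finset V → ℝ)
    (hx0 : ∀ A, 0 ≤ x A)
    (hxcov : ∀ v : V, 1 ≤ ∑ A ∈ H.filter (fun A => v ∈ A), x A) :
    ∀ i < m, 0 < w (Y i) →
      (∑ j ∈ Finset.Ico i m, ((Y j \ (Finset.range j).biUnion Y).card : ℝ)) ≤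
      ((Y i \ (Finset.range i).biUnion Y).card : ℝ) / w (Y i) *
        (∑ A ∈ H, w A * x A) := by
  intro i hi hwi
  set B : ℕ → Finset V := fun k => (Finset.range k).biUnion Y with hB
  have hyi : 0 < ((Y i \ B i).card : ℝ) := by
    exact_mod_cast Finset.card_pos.mpr (hres i hi)
  -- Step A: sum of residual cards equals card of remaining vertices
  have hsum : ∀ k, i ≤ k →
      ∑ j ∈ Finset.Ico i k, (Y j \ B j).card = (B k \ B i).card := by
    intro k hk
    induction k, hk using Nat.le_induction with
    | base => simp
    | succ k hk ih =>
      rw [Finset.sum_Ico_succ_top hk, ih]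
      have hdecomp : B (k+1) \ B i = (B k \ B i) ∪ (Y k \ B k) := by
        ext v
        simp only [hB, Finset.mem_sdiff, Finset.mem_union, Finset.mem_biUnion,
          Finset.mem_range]
        constructor
        · rintro ⟨⟨j, hj, hv⟩, hni⟩
          by_cases hvk : ∃ j, j < k ∧ v ∈ Y j
          · exact Or.inl ⟨hvk, hni⟩
          · rcases Nat.lt_succ_iff_lt_or_eq.mp hj with h | h
            · exact absurd ⟨j, h, hv⟩ hvk
            · exact Or.inr ⟨h ▸ hv, hvk⟩
        · rintro (⟨⟨j, hj, hv⟩, hni⟩ | ⟨hv, hnk⟩)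
          · exact ⟨⟨j, hj.trans (Nat.lt_succ_self k), hv⟩, hni⟩
          · refine ⟨⟨k, Nat.lt_succ_self k, hv⟩, ?_⟩
            rintro ⟨j, hj, hv'⟩
            exact hnk ⟨j, hj.trans_le hk, hv'⟩
      have hdisj : Disjoint (B k \ B i) (Y k \ B k) := by
        rw [Finset.disjoint_left]
        intro v hv1 hv2
        exact (Finset.mem_sdiff.mp hv2).2 (Finset.mem_sdiff.mp hv1).1
      rw [hdecomp, Finset.card_union_of_disjoint hdisj]
  have hBm : B m \ B i = Finset.univ \ B i := by
    ext v
    simp only [Finset.mem_sdiff, Finset.mem_univ, true_and]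
    exact and_iff_right (hstop v)
  -- Step B: fractional cover bound
  have hfilter : ∀ A : Finset V, (Finset.univ \ B i).filter (fun v => v ∈ A) = A \ B i := by
    intro A
    ext v
    simp only [Finset.mem_filter, Finset.mem_sdiff, Finset.mem_univ, true_and]
    tauto
  have h1 : (((Finset.univ \ B i).card : ℝ)) ≤
      ∑ A ∈ H, x A * ((A \ B i).card : ℝ) := by
    calc (((Finset.univ \ B i).card : ℝ))
        = ∑ v ∈ Finset.univ \ B i, (1 : ℝ) := by simp
      _ ≤ ∑ v ∈ Finset.univ \ B i, ∑ A ∈ H.filter (fun A => v ∈ A), x A :=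
          Finset.sum_le_sum (fun v _ => hxcov v)
      _ = ∑ v ∈ Finset.univ \ B i, ∑ A ∈ H, if v ∈ A then x A else 0 := by
          refine Finset.sum_congr rfl fun v _ => ?_
          rw [Finset.sum_filter]
      _ = ∑ A ∈ H, ∑ v ∈ Finset.univ \ B i, if v ∈ A then x A else 0 :=
          Finset.sum_comm
      _ = ∑ A ∈ H, x A * ((A \ B i).card : ℝ) := by
          refine Finset.sum_congr rfl fun A _ => ?_
          rw [← Finset.sum_filter, Finset.sum_const, hfilter A, nsmul_eq_mul, mul_comm]
  -- Step C: per-edge bound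
  have h2 : ∀ A ∈ H, x A * ((A \ B i).card : ℝ) ≤
      ((Y i \ B i).card : ℝ) / w (Y i) * (w A * x A) := by
    intro A hA
    rcases Nat.eq_zero_or_pos (A \ B i).card with h0 | hpos
    · rw [h0]
      simp only [Nat.cast_zero, mul_zero]
      have := mul_nonneg (mul_nonneg (div_nonneg hyi.le hwi.le) (hw0 A hA)) (hx0 A)
      linarith [this]
    · have hc : (0 : ℝ) < ((A \ B i).card : ℝ) := by exact_mod_cast hpos
      have hne : (A \ B i).Nonempty := Finset.card_pos.mp hpos
      have hm := hmin i hi A hA hne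
      have key : ((A \ B i).card : ℝ) ≤ ((Y i \ B i).card : ℝ) / w (Y i) * w A := by
        rw [div_le_div_iff₀ hyi hc] at hm
        rw [div_mul_eq_mul_div, le_div_iff₀ hwi]
        nlinarith
      calc x A * ((A \ B i).card : ℝ)
          ≤ x A * (((Y i \ B i).card : ℝ) / w (Y i) * w A) := by
            exact mul_le_mul_of_nonneg_left key (hx0 A)
        _ = ((Y i \ B i).card : ℝ) / w (Y i) * (w A * x A) := by ring
  -- combine
  have hcast : (∑ j ∈ Finset.Ico i m, ((Y j \ B j).card : ℝ))
      = (((Finset.univ \ B i).card : ℝ)) := by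
    rw [← Nat.cast_sum]
    rw [hsum m hi.le, hBm]
  calc (∑ j ∈ Finset.Ico i m, ((Y j \ B j).card : ℝ))
      = (((Finset.univ \ B i).card : ℝ)) := hcast
    _ ≤ ∑ A ∈ H, x A * ((A \ B i).card : ℝ) := h1
    _ ≤ ∑ A ∈ H, ((Y i \ B i).card : ℝ) / w (Y i) * (w A * x A) :=
        Finset.sum_le_sum h2
    _ = ((Y i \ B i).card : ℝ) / w (Y i) * (∑ A ∈ H, w A * x A) := by
        rw [Finset.mul_sum]
end

section
/- Randomized rounding bound: let H be a hypergraph on n vertices containing all singletons with weights w, w({v}) ≤ 1, let x be a fractional edge-cover, and t > 0. Select each edge A independently with probability p_A = min(1, t·x_A), and add as singletons all uncovered vertices. Then the expected total weight of the resulting cover is at most t·Σ_A w(A)x_A + n·e^{−t}; in particular the probability that a fixed vertex v is uncovered by the random selection is at most e^{−t}. -/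
/-! A vertex `v` stays uncovered only if every edge through `v` is rejected, which by independence
happens with probability `∏_{A ∋ v} (1 - min(1, t x_A)) ≤ exp(-t Σ_{A ∋ v} x_A) ≤ e^{-t}`.
By linearity of expectation, each edge then contributes `w(A) p_A ≤ t w(A) x_A` to the expected
weight and each singleton at most `w({v}) e^{-t} ≤ e^{-t}`. -/

open Finset MeasureTheory
open scoped NNReal ENNReal

lemma one_sub_min_one_le_exp_neg (a : ℝ) : 1 - min 1 a ≤ Real.exp (-a) := by
  rcases le_total a 1 with h | h
  · rw [min_eq_right h]
    linarith [Real.add_one_le_exp (-a)]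
  · rw [min_eq_left h, sub_self]
    exact (Real.exp_pos _).le

lemma prod_one_sub_min_one_le_exp_neg_sum {ι : Type*} (s : Finset ι) (a : ι → ℝ) :
    ∏ i ∈ s, (1 - min 1 (a i)) ≤ Real.exp (-∑ i ∈ s, a i) := by
  rw [← Finset.sum_neg_distrib, Real.exp_sum]
  exact Finset.prod_le_prod (fun _ _ => sub_nonneg.2 (min_le_left _ _))
    fun i _ => one_sub_min_one_le_exp_neg (a i)

lemma integral_sum_filter {Ω ι : Type*} [MeasurableSpace Ω] (μ : Measure Ω) [IsFiniteMeasure μ]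
    (s : Finset ι) (P : Ω → ι → Prop) [∀ ω, DecidablePred (P ω)]
    (hP : ∀ i ∈ s, MeasurableSet {ω | P ω i}) (c : ι → ℝ) :
    ∫ ω, ∑ i ∈ s with P ω i, c i ∂μ = ∑ i ∈ s, μ.real {ω | P ω i} * c i := by
  have hind : ∀ ω, ∑ i ∈ s with P ω i, c i = ∑ i ∈ s, {ω | P ω i}.indicator (fun _ => c i) ω := by
    intro ω
    rw [Finset.sum_filter]
    exact Finset.sum_congr rfl fun i _ => by simp [Set.indicator_apply]
  simp_rw [hind]
  rw [integral_finsetSum _ fun i hi => (integrable_const _).indicator (hP i hi)]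
  exact Finset.sum_congr rfl fun i hi => integral_indicator_const _ (hP i hi)

section BernoulliPi

variable {ι : Type*} [Fintype ι] (q : ι → ℝ≥0) (hq : ∀ i, q i ≤ 1)

noncomputable def bernoulliPi : Measure (ι → Bool) :=
  Measure.pi fun i => (PMF.bernoulli (q i) (hq i)).toMeasure

instance : IsProbabilityMeasure (bernoulliPi q hq) := by
  unfold bernoulliPi
  infer_instance

lemma bernoulliPi_real_setOf_eq_true (i : ι) :
    (bernoulliPi q hq).real {ω | ω i = true} = q i := by
  have hpres := measurePreserving_eval (fun i => (PMF.bernoulli (q i) (hq i)).toMeasure) i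
  rw [measureReal_def, bernoulliPi,
    show {ω : ι → Bool | ω i = true} = Function.eval i ⁻¹' ({true} : Set Bool) from rfl,
    hpres.measure_preimage (measurableSet_singleton _).nullMeasurableSet,
    PMF.toMeasure_apply_singleton _ _ (measurableSet_singleton _), PMF.bernoulli_apply]
  simp

lemma bernoulliPi_setOf_forall_false (s : Finset ι) :
    bernoulliPi q hq {ω | ∀ i ∈ s, ω i = false} = ((∏ i ∈ s, (1 - q i) : ℝ≥0) : ℝ≥0∞) := by
  classical
  have hpi : {ω : ι → Bool | ∀ i ∈ s, ω i = false}
      = Set.univ.pi fun i => if i ∈ s then {false} else Set.univ := by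
    ext ω
    simp only [Set.mem_setOf_eq, Set.mem_pi, Set.mem_univ, true_implies]
    refine forall_congr' fun i => ?_
    split_ifs <;> simp_all
  rw [hpi, bernoulliPi, Measure.pi_pi]
  simp_rw [apply_ite (PMF.toMeasure _), measure_univ]
  rw [Fintype.prod_ite_mem]
  push_cast
  refine Finset.prod_congr rfl fun i _ => ?_
  rw [PMF.toMeasure_apply_singleton _ _ (measurableSet_singleton _), PMF.bernoulli_apply]
  simp [ENNReal.coe_sub]

lemma bernoulliPi_setOf_forall_false_le_exp (s : Finset ι) (a : ι → ℝ)
    (hqa : ∀ i, (q i : ℝ) = min 1 (a i)) :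
    bernoulliPi q hq {ω | ∀ i ∈ s, ω i = false} ≤ ENNReal.ofReal (Real.exp (-∑ i ∈ s, a i)) := by
  rw [bernoulliPi_setOf_forall_false, ← ENNReal.ofReal_coe_nnreal]
  refine ENNReal.ofReal_le_ofReal ?_
  calc ((∏ i ∈ s, (1 - q i) : ℝ≥0) : ℝ) = ∏ i ∈ s, (1 - min 1 (a i)) := by
        push_cast [NNReal.coe_sub (hq _), hqa]
        rfl
    _ ≤ _ := prod_one_sub_min_one_le_exp_neg_sum s a

end BernoulliPi

lemma bernoulliPi_uncovered_le_exp {V : Type*} [DecidableEq V] (H : Finset (Finset V))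
    (x : Finset V → ℝ) (t : ℝ) (ht : 0 ≤ t) (p : {A // A ∈ H} → ℝ≥0) (hp1 : ∀ A, p A ≤ 1)
    (hp : ∀ A, (p A : ℝ) = min 1 (t * x A.1)) (v : V)
    (hv : 1 ≤ ∑ A ∈ H with v ∈ A, x A) :
    bernoulliPi p hp1 {ω | ∀ A : {A // A ∈ H}, ω A = true → v ∉ A.1}
      ≤ ENNReal.ofReal (Real.exp (-t)) := by
  have uncovered_eq : {ω : {A // A ∈ H} → Bool | ∀ A, ω A = true → v ∉ A.1}
      = {ω | ∀ A ∈ H.attach.filter (v ∈ ·.1), ω A = false} := by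
    ext ω
    simp only [Set.mem_setOf_eq, mem_filter, mem_attach, true_and]
    exact forall_congr' fun A => by cases ω A <;> simp
  have hcov : ∑ A ∈ H.attach with v ∈ A.1, x A.1 = ∑ A ∈ H with v ∈ A, x A := by
    rw [sum_filter, sum_filter]
    exact sum_attach H fun A => if v ∈ A then x A else 0
  rw [uncovered_eq]
  refine (bernoulliPi_setOf_forall_false_le_exp p hp1 _ (fun A => t * x A.1) hp).trans
    (ENNReal.ofReal_le_ofReal (Real.exp_le_exp.2 (neg_le_neg ?_)))
  rw [← mul_sum, hcov]
  nlinarith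

/-- randomized rounding. Select each edge `A` independently with probability
`p_A = min(1, t·x_A)` (product Bernoulli measure `μ`), and add as singletons all uncovered
vertices. Then each fixed vertex is uncovered with probability at most `e^{-t}`, and the
expected total weight of the resulting cover is at most `t·Σ_A w(A)x_A + n·e^{-t}`. -/
theorem stmt13 {V : Type*} [Fintype V] [DecidableEq V]
    (H : Finset (Finset V)) (w : Finset V → ℝ)
    (hsing : ∀ v : V, {v} ∈ H)
    (hw0 : ∀ A ∈ H, 0 ≤ w A)
    (hw1 : ∀ v : V, w {v} ≤ 1)
    (x : Finset V → ℝ)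
    (hxcov : ∀ v : V, 1 ≤ ∑ A ∈ H.filter (fun A => v ∈ A), x A)
    (t : ℝ) (ht : 0 < t)
    (p : {A // A ∈ H} → NNReal) (hp1 : ∀ A, p A ≤ 1)
    (hp : ∀ A, (p A : ℝ) = min 1 (t * x A.1))
    (μ : Measure ({A // A ∈ H} → Bool))
    (hμ : μ = Measure.pi fun A => ((PMF.bernoulli (p A) (by exact_mod_cast hp1 A)).toMeasure)) :
    (∀ v : V,
      μ {ω | ∀ A : {A // A ∈ H}, ω A = true → v ∉ A.1} ≤ ENNReal.ofReal (Real.exp (-t))) ∧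
    (∫ ω, ((∑ A ∈ H.attach.filter (fun A => ω A = true), w A.1) +
        ∑ v ∈ Finset.univ.filter
          (fun v : V => ∀ A : {A // A ∈ H}, ω A = true → v ∉ A.1), w {v}) ∂μ) ≤
      t * (∑ A ∈ H, w A * x A) + (Fintype.card V : ℝ) * Real.exp (-t) := by
  obtain rfl : μ = bernoulliPi p hp1 := hμ
  have uncovered_le v :=
    bernoulliPi_uncovered_le_exp H x t ht.le p hp1 hp v (hxcov v)
  have selected_le : ∀ A : {A // A ∈ H},
      (bernoulliPi p hp1).real {ω | ω A = true} * w A.1 ≤ t * (w A.1 * x A.1) := by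
    intro A
    rw [bernoulliPi_real_setOf_eq_true, hp]
    nlinarith [min_le_right 1 (t * x A.1), hw0 A.1 A.2]
  have uncovered_weight_le : ∀ v : V,
      (bernoulliPi p hp1).real {ω | ∀ A, ω A = true → v ∉ A.1} * w {v} ≤ Real.exp (-t) :=
    fun v => (mul_le_mul (ENNReal.toReal_le_of_le_ofReal (Real.exp_pos _).le (uncovered_le v))
      (hw1 v) (hw0 _ (hsing v)) (Real.exp_pos _).le).trans_eq (mul_one _)
  refine ⟨uncovered_le, ?_⟩
  rw [integral_add Integrable.of_finite Integrable.of_finite,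
    integral_sum_filter _ _ (fun (ω : {A // A ∈ H} → Bool) A => ω A = true)
      fun _ _ => .of_discrete,
    integral_sum_filter _ _ (fun (ω : {A // A ∈ H} → Bool) v => ∀ A, ω A = true → v ∉ A.1)
      fun _ _ => .of_discrete]
  calc _ ≤ ∑ A ∈ H.attach, t * (w A.1 * x A.1) + ∑ _v : V, Real.exp (-t) :=
        add_le_add (sum_le_sum fun A _ => selected_le A)
          (sum_le_sum fun v _ => uncovered_weight_le v)
    _ = _ := by
      rw [← mul_sum, sum_attach H fun A => w A * x A, sum_const, card_univ, nsmul_eq_mul]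
end

section
/- In the hypergraph on the p-subsets of a 2p-set with edges E_s = {A : s ∈ A} for s ∈ S and all weights 1, the assignment x_{E_s} = 1/p for all s ∈ S is a fractional edge-cover, and it is optimal: the minimum total weight of a fractional edge-cover equals 2, so σ* = 2/C(2p,p) while σ = (p+1)/C(2p,p). -/
/-!
A fractional cover must put weight at least `1` on some `p`-set `A` and on its complement,
so its total weight is at least `2`, which the uniform weight `1/p` attains. Likewise a set
of points meeting every `p`-set cannot miss `p` points, so it has at least `p + 1` elements,
and any `p + 1` points meet every `p`-set by pigeonhole.
-/

open Finset

section

variable {S : Type*} [Fintype S]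

lemma exists_card_eq_and_card_compl_eq [DecidableEq S] {p : ℕ}
    (hcard : Fintype.card S = 2 * p) : ∃ A : Finset S, #A = p ∧ #Aᶜ = p := by
  obtain ⟨A, -, hA⟩ := exists_subset_card_eq (s := (univ : Finset S)) (n := p)
    (by rw [card_univ, hcard]; omega)
  exact ⟨A, hA, by rw [card_compl, hA, hcard]; omega⟩

lemma two_mul_le_sum_of_forall_card_eq {p : ℕ} (hcard : Fintype.card S = 2 * p)
    {x : S → ℝ} {b : ℝ} (hx : ∀ A : Finset S, #A = p → b ≤ ∑ s ∈ A, x s) :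
    2 * b ≤ ∑ s, x s := by
  classical
  obtain ⟨A, hA, hAc⟩ := exists_card_eq_and_card_compl_eq hcard
  calc 2 * b ≤ ∑ s ∈ A, x s + ∑ s ∈ Aᶜ, x s := by linarith [hx A hA, hx Aᶜ hAc]
    _ = ∑ s, x s := sum_add_sum_compl A x

lemma card_lt_card_add_of_forall_inter_nonempty [DecidableEq S] {k : ℕ} {T : Finset S}
    (hT : ∀ A : Finset S, #A = k → (A ∩ T).Nonempty) : Fintype.card S < #T + k := by
  by_contra! h
  obtain ⟨A, hAT, hA⟩ := exists_subset_card_eq (s := Tᶜ) (n := k)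
    (by rw [card_compl]; omega)
  obtain ⟨a, ha⟩ := hT A hA
  exact mem_compl.mp (hAT (mem_inter.mp ha).1) (mem_inter.mp ha).2

lemma forall_inter_nonempty_of_card_lt_card_add [DecidableEq S] {k : ℕ} {T : Finset S}
    (hT : Fintype.card S < #T + k) (A : Finset S) (hA : #A = k) : (A ∩ T).Nonempty :=
  inter_nonempty_of_card_lt_card_add_card (subset_univ A) (subset_univ T)
    (by rw [card_univ]; omega)

end

/-- in the hypergraph on the `p`-subsets of a `2p`-set with edges
`E_s = {A : s ∈ A}` and all weights `1`, the assignment `x_{E_s} = 1/p` is a fractional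
edge-cover, the minimum total weight of a fractional edge-cover is `2`, and hence
`σ* = 2/C(2p,p)` while `σ = (p+1)/C(2p,p)` (with `n = C(2p,p)` vertices). -/
theorem stmt16 {S : Type*} [Fintype S] [DecidableEq S] (p : ℕ) (hp : 1 ≤ p)
    (hcard : Fintype.card S = 2 * p) :
    ((∀ s : S, (0:ℝ) ≤ 1 / p) ∧
      ∀ A : Finset S, A.card = p → 1 ≤ ∑ s ∈ A, (1 / p : ℝ)) ∧
    IsLeast {c : ℝ | ∃ x : S → ℝ, (∀ s, 0 ≤ x s) ∧
        (∀ A : Finset S, A.card = p → 1 ≤ ∑ s ∈ A, x s) ∧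
        c = ∑ s : S, x s} 2 ∧
    sInf {c : ℝ | ∃ x : S → ℝ, (∀ s, 0 ≤ x s) ∧
        (∀ A : Finset S, A.card = p → 1 ≤ ∑ s ∈ A, x s) ∧
        c = (∑ s : S, x s) / ((2 * p).choose p : ℝ)} = 2 / ((2 * p).choose p : ℝ) ∧
    sInf {c : ℝ | ∃ T : Finset S,
        (∀ A : Finset S, A.card = p → (A ∩ T).Nonempty) ∧
        c = (T.card : ℝ) / ((2 * p).choose p : ℝ)} =
      ((p : ℝ) + 1) / ((2 * p).choose p : ℝ) := by
  have hp0 : (p : ℝ) ≠ 0 := by positivity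
  have uniform_cover (A : Finset S) (hA : #A = p) : 1 ≤ ∑ s ∈ A, (1 / p : ℝ) := by
    simp [hA, hp0]
  have uniform_total : ∑ s : S, (1 / p : ℝ) = 2 := by
    simp only [sum_const, card_univ, hcard, nsmul_eq_mul]
    push_cast
    field_simp
  have total_ge (x : S → ℝ) (hx : ∀ A : Finset S, #A = p → 1 ≤ ∑ s ∈ A, x s) :
      2 ≤ ∑ s, x s := by
    simpa using two_mul_le_sum_of_forall_card_eq hcard hx
  obtain ⟨T, -, hT⟩ := exists_subset_card_eq (s := (univ : Finset S)) (n := p + 1)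
    (by rw [card_univ, hcard]; omega)
  refine ⟨⟨fun _ => by positivity, uniform_cover⟩,
    ⟨⟨_, fun _ => by positivity, uniform_cover, uniform_total.symm⟩, ?_⟩, ?_, ?_⟩
  · rintro _ ⟨x, -, hx, rfl⟩
    exact total_ge x hx
  · refine IsLeast.csInf_eq ⟨⟨_, fun _ => by positivity, uniform_cover, by rw [uniform_total]⟩, ?_⟩
    rintro _ ⟨x, -, hx, rfl⟩
    gcongr
    exact total_ge x hx
  · refine IsLeast.csInf_eq ⟨⟨T, forall_inter_nonempty_of_card_lt_card_add (by omega),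
      by rw [hT]; push_cast; ring⟩, ?_⟩
    rintro _ ⟨T', hT', rfl⟩
    have := card_lt_card_add_of_forall_inter_nonempty hT'
    gcongr
    exact_mod_cast (by omega : p + 1 ≤ #T')
end
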